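/- Let $C_1$ and $C_2$ be two polyhedral cones in $\mathbb{R}^m$ that belong to a common fan (i.e., $C_1\cap C_2$ is a face of each) and suppose $C_1\cap C_2 = \{0\}$. Let $R>0$. If $C_1$ is strongly convex and generated by finitely many vectors $w_1,\dots,w_k$, then there exists $A>0$ such that for every point $x=\sum_{j=1}^k b_j w_j \in C_1$ (with all $b_j\ge0$) lying in the set $\{y\in\mathbb{R}^m \mid y \in C_2 + [-R,R]^m\}$, one has $b_j < A$ for all $j$, provided the $w_j$ are linearly independent. -/

import Mathlib

/-!
On the compact set of nonnegative unit coefficient vectors `c`, the distance from `∑ c_j w_j`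
to the closed cone `C₂` is continuous and never zero (independence of the `w_j` and
`C₁ ∩ C₂ = {0}`), so it is at least some `ε > 0`. As `C₂` is a cone, this distance is
positively homogeneous, hence `ε ‖b‖ ≤ dist(∑ b_j w_j, C₂) ≤ R` for every `b` in question.
-/

open Set Pointwise

section ConeDistance

variable {V E : Type*} [NormedAddCommGroup V] [NormedSpace ℝ V]
  [NormedAddCommGroup E] [NormedSpace ℝ E]

theorem smul_set_eq_self_of_cone {C : Set E} (hC : ∀ x ∈ C, ∀ t : ℝ, 0 ≤ t → t • x ∈ C)
    {t : ℝ} (ht : 0 < t) : t • C = C := by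
  refine (smul_set_subset_iff.2 fun x hx => hC x hx t ht.le).antisymm fun x hx => ?_
  exact ⟨t⁻¹ • x, hC x hx _ (inv_nonneg.2 ht.le), smul_inv_smul₀ ht.ne' x⟩

theorem infDist_smul_of_cone {C : Set E} (hC : ∀ x ∈ C, ∀ t : ℝ, 0 ≤ t → t • x ∈ C)
    {t : ℝ} (ht : 0 < t) (x : E) :
    Metric.infDist (t • x) C = t * Metric.infDist x C := by
  conv_lhs => rw [← smul_set_eq_self_of_cone hC ht]
  rw [infDist_smul₀ ht.ne', Real.norm_of_nonneg ht.le]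

variable [FiniteDimensional ℝ V] {K : Set V} {C : Set E} (f : V →ₗ[ℝ] E)

theorem exists_pos_le_infDist_on_unitSphere (hK : IsClosed K) (hC : IsClosed C)
    (hCne : C.Nonempty) (hKC : ∀ x ∈ K, f x ∈ C → x = 0) :
    ∃ ε > 0, ∀ x ∈ K ∩ Metric.sphere 0 1, ε ≤ Metric.infDist (f x) C := by
  rcases (K ∩ Metric.sphere 0 1).eq_empty_or_nonempty with hS | hS
  · exact ⟨1, one_pos, by simp [hS]⟩
  have hcont : Continuous fun x => Metric.infDist (f x) C :=
    (Metric.continuous_infDist_pt C).comp f.continuous_of_finiteDimensional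
  obtain ⟨x₀, ⟨hx₀K, hx₀1⟩, hmin⟩ :=
    ((isCompact_sphere 0 1).inter_left hK).exists_isMinOn hS hcont.continuousOn
  refine ⟨_, Metric.infDist_nonneg.lt_of_ne fun h => ?_, fun x hx => hmin hx⟩
  have : x₀ = 0 := hKC x₀ hx₀K ((hC.mem_iff_infDist_zero hCne).2 h.symm)
  simp [this] at hx₀1

theorem exists_pos_mul_norm_le_infDist (hK : IsClosed K)
    (hKcone : ∀ x ∈ K, ∀ t : ℝ, 0 ≤ t → t • x ∈ K) (hC : IsClosed C) (hCne : C.Nonempty)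
    (hCcone : ∀ x ∈ C, ∀ t : ℝ, 0 ≤ t → t • x ∈ C) (hKC : ∀ x ∈ K, f x ∈ C → x = 0) :
    ∃ ε > 0, ∀ x ∈ K, ε * ‖x‖ ≤ Metric.infDist (f x) C := by
  obtain ⟨ε, hε, hsphere⟩ := exists_pos_le_infDist_on_unitSphere f hK hC hCne hKC
  refine ⟨ε, hε, fun x hx => ?_⟩
  rcases eq_or_ne x 0 with rfl | hx0
  · simpa using Metric.infDist_nonneg
  have hnorm : 0 < ‖x‖ := norm_pos_iff.2 hx0
  have hunit : ‖x‖⁻¹ • x ∈ K ∩ Metric.sphere 0 1 :=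
    ⟨hKcone x hx _ (inv_nonneg.2 hnorm.le), by simp [norm_smul, hnorm.ne']⟩
  have := hsphere _ hunit
  rw [map_smul, infDist_smul_of_cone hCcone (inv_pos.2 hnorm)] at this
  rwa [le_inv_mul_iff₀ hnorm, mul_comm] at this

end ConeDistance

theorem statement3_general (m k : ℕ) (C₁ C₂ : Set (Fin m → ℝ))
    -- `C₂` is a closed, convex cone
    (hC₂cone : ∀ x ∈ C₂, ∀ t : ℝ, 0 ≤ t → t • x ∈ C₂)
    (hC₂closed : IsClosed C₂)
    -- the generators of `C₁`
    (w : Fin k → (Fin m → ℝ)) (hw : LinearIndependent ℝ w)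
    (hC₁ : C₁ = {x | ∃ b : Fin k → ℝ, (∀ j, 0 ≤ b j) ∧ x = ∑ j, b j • w j})
    -- `C₁ ∩ C₂` is a face of each (they belong to a common fan) and equals `{0}`
    (hmeet : C₁ ∩ C₂ = {0})
    (R : ℝ) (hR : 0 < R) :
    ∃ A : ℝ, 0 < A ∧ ∀ b : Fin k → ℝ, (∀ j, 0 ≤ b j) →
      (∑ j, b j • w j) ∈ C₂ + {y : Fin m → ℝ | ∀ i, |y i| ≤ R} →
      ∀ j, b j < A := by
  have hC₂ne : C₂.Nonempty := ⟨0, (hmeet.symm ▸ rfl : (0 : Fin m → ℝ) ∈ C₁ ∩ C₂).2⟩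
  have htransverse : ∀ b ∈ Ici (0 : Fin k → ℝ),
      Fintype.linearCombination ℝ w b ∈ C₂ → b = 0 := by
    intro b hb hbC₂
    rw [Fintype.linearCombination_apply] at hbC₂
    have hb₁ : ∑ j, b j • w j ∈ C₁ ∩ C₂ := ⟨hC₁ ▸ ⟨b, hb, rfl⟩, hbC₂⟩
    rw [hmeet, mem_singleton_iff, ← Fintype.linearCombination_apply] at hb₁
    exact hw.fintypeLinearCombination_injective (hb₁.trans (map_zero _).symm)
  obtain ⟨ε, hε, hbound⟩ := exists_pos_mul_norm_le_infDist (Fintype.linearCombination ℝ w)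
    isClosed_Ici (fun _ hb _ ht => mem_Ici.2 (smul_nonneg ht hb)) hC₂closed hC₂ne hC₂cone
    htransverse
  refine ⟨R / ε + 1, by positivity, fun b hb hx j => ?_⟩
  obtain ⟨y, hy, z, hz, hyz⟩ := hx
  have hzR : ‖z‖ ≤ R :=
    (pi_norm_le_iff_of_nonneg hR.le).2 fun i => (Real.norm_eq_abs _).le.trans (hz i)
  have hnorm : ε * ‖b‖ ≤ R := calc
    ε * ‖b‖ ≤ Metric.infDist (∑ j, b j • w j) C₂ := by
      simpa [Fintype.linearCombination_apply] using hbound b hb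
    _ ≤ dist (∑ j, b j • w j) y := Metric.infDist_le_dist_of_mem hy
    _ = ‖z‖ := by rw [← hyz, dist_eq_norm, add_sub_cancel_left]
    _ ≤ R := hzR
  calc b j ≤ ‖b‖ := (le_abs_self _).trans (norm_le_pi_norm b j)
    _ ≤ R / ε := (le_div_iff₀' hε).2 hnorm
    _ < R / ε + 1 := lt_add_one _

/-- Let `C₁, C₂` be polyhedral cones in `ℝᵐ` belonging to a common fan
(so `C₁ ∩ C₂` is a face of each) with `C₁ ∩ C₂ = {0}`, and let `R > 0`.  If `C₁` is
strongly convex and generated by linearly independent vectors `w₁, …, w_k`, then there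
is `A > 0` such that any `x = ∑ b_j w_j ∈ C₁` (all `b_j ≥ 0`) lying in
`C₂ + [-R,R]ᵐ` has `b_j < A` for all `j`. -/
theorem statement3 (m k : ℕ) (C₁ C₂ : Set (Fin m → ℝ))
    -- `C₂` is a closed, convex cone
    (hC₂cone : ∀ x ∈ C₂, ∀ t : ℝ, 0 ≤ t → t • x ∈ C₂)
    (hC₂conv : Convex ℝ C₂) (hC₂closed : IsClosed C₂)
    -- the generators of `C₁`
    (w : Fin k → (Fin m → ℝ)) (hw : LinearIndependent ℝ w)
    (hC₁ : C₁ = {x | ∃ b : Fin k → ℝ, (∀ j, 0 ≤ b j) ∧ x = ∑ j, b j • w j})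
    -- `C₁` is strongly convex
    (hC₁strong : ∀ x ∈ C₁, -x ∈ C₁ → x = 0)
    -- `C₁ ∩ C₂` is a face of each (they belong to a common fan) and equals `{0}`
    (hface₁ : ∃ φ : (Fin m → ℝ) →ₗ[ℝ] ℝ, (∀ x ∈ C₁, 0 ≤ φ x) ∧ C₁ ∩ C₂ = {x ∈ C₁ | φ x = 0})
    (hface₂ : ∃ φ : (Fin m → ℝ) →ₗ[ℝ] ℝ, (∀ x ∈ C₂, 0 ≤ φ x) ∧ C₁ ∩ C₂ = {x ∈ C₂ | φ x = 0})
    (hmeet : C₁ ∩ C₂ = {0})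
    (R : ℝ) (hR : 0 < R) :
    ∃ A : ℝ, 0 < A ∧ ∀ b : Fin k → ℝ, (∀ j, 0 ≤ b j) →
      (∑ j, b j • w j) ∈ C₂ + {y : Fin m → ℝ | ∀ i, |y i| ≤ R} →
      ∀ j, b j < A :=
  statement3_general m k C₁ C₂ hC₂cone hC₂closed w hw hC₁ hmeet R hR
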